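/- Let z ∈ ℂⁿ with unit-modulus entries, W Hermitian, σ ≥ 0, ℒx = (z*x/n)z + (σ/n)Wx. Suppose ε ∈ (0, 1/2) and x, y ∈ ℂⁿ with ‖x‖₂ = ‖y‖₂ = √n, d₂(x, z) ≤ ε√n, and d₂(y, z) ≤ ε√n. Then d₂(ℒx, ℒy) ≤ (6ε + σ‖W‖₂/n) d₂(x, y). -/

import Mathlib

noncomputable section

namespace PhaseSync

open Complex

variable {n : ℕ}

/-- Euclidean (ℓ²) norm on `Fin n → ℂ`. -/
def l2norm (v : Fin n → ℂ) : ℝ :=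
  Real.sqrt (∑ k, ‖v k‖ ^ 2)

/-- Entrywise sup (ℓ∞) norm on `Fin n → ℂ`. -/
def linfnorm (v : Fin n → ℂ) : ℝ :=
  ⨆ k, ‖v k‖

/-- Hermitian inner product `x*y = ∑ₖ conj(xₖ) yₖ`. -/
def herm (x y : Fin n → ℂ) : ℂ :=
  ∑ k, (starRingEnd ℂ) (x k) * y k

/-- Distance up to a global phase: `d₂(x,y) = inf_θ ‖x e^{iθ} - y‖₂`. -/
def d2 (x y : Fin n → ℂ) : ℝ :=
  ⨅ θ : ℝ, l2norm (fun k => Complex.exp (θ * Complex.I) * x k - y k)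

/-- Sup-norm distance up to a global phase. -/
def dinf (x y : Fin n → ℂ) : ℝ :=
  ⨅ θ : ℝ, linfnorm (fun k => Complex.exp (θ * Complex.I) * x k - y k)

/-- ℓ² operator (spectral) norm of a matrix. -/
def opNorm (A : Matrix (Fin n) (Fin n) ℂ) : ℝ :=
  ⨆ u : {u : Fin n → ℂ // l2norm u = 1}, l2norm (A.mulVec u)

/-- Entrywise projection to the unit circle (on nonzero entries). -/
def proj (v : Fin n → ℂ) : Fin n → ℂ :=
  fun k => v k / (‖v k‖ : ℂ)

/-- The rank-one matrix `z z*`. -/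
def outer (z : Fin n → ℂ) : Matrix (Fin n) (Fin n) ℂ :=
  Matrix.of fun i j => z i * (starRingEnd ℂ) (z j)

/-- The operator `ℒ v = (z*v/n) z + (σ/n) W v`. -/
def Lop (z : Fin n → ℂ) (σ : ℝ) (W : Matrix (Fin n) (Fin n) ℂ) (v : Fin n → ℂ) : Fin n → ℂ :=
  (herm z v / (n : ℂ)) • z + (σ / (n : ℝ)) • W.mulVec v

/-!
Align `x` to `y` by the phase `e^{iθ}` realising `d₂(x, y)` and put `v = e^{iθ}x - y`, so that
`‖v‖ = d₂(x, y)` and, `ℒ` being linear, `e^{iθ}ℒx - ℒy = ℒv`. The noise part of `ℒv` has norm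
at most `σ‖W‖₂ d₂(x, y)/n`. For the rank-one part, `|z*v| ≤ 2ε√n d₂(x, y)`: up to a phase, `z`
lies within `ε√n` of `e^{iθ}x`, and since `‖x‖ = ‖y‖` and `⟨y, e^{iθ}x⟩ ≥ 0` one has
`2|⟨e^{iθ}x, v⟩| = ‖v‖² ≤ 2ε√n ‖v‖`. This even gives the constant `2ε + σ‖W‖₂/n`.
-/

open scoped InnerProductSpace Matrix
open WithLp (toLp)

theorem exp_neg_arg_mul_I_mul (c : ℂ) : exp (↑(-c.arg) * I) * c = ‖c‖ := by
  nth_rewrite 2 [← norm_mul_exp_arg_mul_I c]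
  rw [mul_left_comm, ← exp_add, ofReal_neg, neg_mul, neg_add_cancel, exp_zero, mul_one]

section PhaseDist

variable {E : Type*} [NormedAddCommGroup E] [InnerProductSpace ℂ E]

def phaseDist (u v : E) : ℝ :=
  ⨅ θ : ℝ, ‖exp (θ * I) • u - v‖

theorem phaseDist_le (u v : E) (θ : ℝ) : phaseDist u v ≤ ‖exp (θ * I) • u - v‖ :=
  ciInf_le ⟨0, by rintro _ ⟨θ, rfl⟩; exact norm_nonneg _⟩ θ

theorem norm_exp_smul_sub_sq (u v : E) (θ : ℝ) :
    ‖exp (θ * I) • u - v‖ ^ 2 = ‖u‖ ^ 2 + ‖v‖ ^ 2 - 2 * (⟪v, exp (θ * I) • u⟫_ℂ).re := by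
  rw [norm_sub_sq (𝕜 := ℂ), norm_smul, norm_exp_ofReal_mul_I, one_mul, ← inner_conj_symm,
    RCLike.re_to_complex, conj_re]
  ring

theorem exists_phase_aligned (u v : E) :
    ∃ θ : ℝ, ⟪v, exp (θ * I) • u⟫_ℂ = ‖⟪v, exp (θ * I) • u⟫_ℂ‖ ∧
      ‖exp (θ * I) • u - v‖ = phaseDist u v := by
  set c := ⟪v, u⟫_ℂ
  have hinner (θ : ℝ) : ⟪v, exp (θ * I) • u⟫_ℂ = exp (θ * I) * c := inner_smul_right _ _ _
  have hnorm (θ : ℝ) : ‖⟪v, exp (θ * I) • u⟫_ℂ‖ = ‖c‖ := by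
    rw [hinner, norm_mul, norm_exp_ofReal_mul_I, one_mul]
  have haligned : ⟪v, exp (↑(-c.arg) * I) • u⟫_ℂ = ‖c‖ := by
    rw [hinner, exp_neg_arg_mul_I_mul]
  refine ⟨-c.arg, by rw [hnorm, haligned],
    le_antisymm (le_ciInf fun θ => ?_) (phaseDist_le _ _ _)⟩
  have hre : (⟪v, exp (θ * I) • u⟫_ℂ).re ≤ ‖c‖ := hnorm θ ▸ re_le_norm _
  have h_aligned := norm_exp_smul_sub_sq u v (-c.arg)
  have h_other := norm_exp_smul_sub_sq u v θ
  rw [haligned, ofReal_re] at h_aligned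
  exact pow_le_pow_iff_left₀ (norm_nonneg _) (norm_nonneg _) two_ne_zero |>.mp (by linarith)

theorem phaseDist_triangle (u v w : E) : phaseDist u v ≤ phaseDist u w + phaseDist v w := by
  obtain ⟨α, -, hα⟩ := exists_phase_aligned u w
  obtain ⟨β, -, hβ⟩ := exists_phase_aligned v w
  have hrotate : exp (↑(α - β) * I) • u - v
      = exp (↑(-β) * I) • (exp (α * I) • u - exp (β * I) • v) := by
    rw [smul_sub, smul_smul, smul_smul, ← exp_add, ← exp_add]
    push_cast
    ring_nf
    rw [exp_zero, one_smul]
  calc phaseDist u v ≤ ‖exp (↑(α - β) * I) • u - v‖ := phaseDist_le _ _ _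
    _ = ‖exp (α * I) • u - exp (β * I) • v‖ := by
      rw [hrotate, norm_smul, norm_exp_ofReal_mul_I, one_mul]
    _ ≤ ‖exp (α * I) • u - w‖ + ‖exp (β * I) • v - w‖ := by
      simpa only [dist_eq_norm] using dist_triangle_right _ _ w
    _ = phaseDist u w + phaseDist v w := by rw [hα, hβ]

theorem phaseDist_exp_smul_le (u w : E) (θ : ℝ) :
    phaseDist w (exp (θ * I) • u) ≤ phaseDist u w := by
  obtain ⟨α, -, hα⟩ := exists_phase_aligned u w
  have hrotate : exp (↑(θ - α) * I) • w - exp (θ * I) • u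
      = -exp (↑(θ - α) * I) • (exp (α * I) • u - w) := by
    rw [smul_sub, smul_smul, neg_mul, ← exp_add, neg_smul, neg_smul, sub_neg_eq_add,
      neg_add_eq_sub]
    push_cast
    ring_nf
  calc phaseDist w (exp (θ * I) • u) ≤ ‖exp (↑(θ - α) * I) • w - exp (θ * I) • u‖ :=
        phaseDist_le _ _ _
    _ = ‖exp (α * I) • u - w‖ := by
      rw [hrotate, norm_smul, norm_neg, norm_exp_ofReal_mul_I, one_mul]
    _ = phaseDist u w := hα

theorem two_mul_norm_inner_sub_eq {u v : E} (huv : ‖u‖ = ‖v‖)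
    (halign : ⟪v, u⟫_ℂ = ‖⟪v, u⟫_ℂ‖) : 2 * ‖⟪u, u - v⟫_ℂ‖ = ‖u - v‖ ^ 2 := by
  have hle : ‖⟪v, u⟫_ℂ‖ ≤ ‖u‖ ^ 2 := by
    simpa only [huv, sq] using norm_inner_le_norm (𝕜 := ℂ) v u
  generalize ‖⟪v, u⟫_ℂ‖ = r at halign hle
  have hinner : ⟪u, u - v⟫_ℂ = ((‖u‖ ^ 2 - r : ℝ) : ℂ) := by
    rw [inner_sub_right, inner_self_eq_norm_sq_to_K, ← inner_conj_symm, halign, conj_ofReal]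
    push_cast
    rfl
  rw [hinner, norm_real, Real.norm_of_nonneg (sub_nonneg.mpr hle), norm_sub_sq (𝕜 := ℂ),
    ← inner_conj_symm, halign, RCLike.re_to_complex, conj_ofReal, ofReal_re, ← huv]
  ring

theorem norm_inner_sub_le (w : E) {u v : E} (huv : ‖u‖ = ‖v‖)
    (halign : ⟪v, u⟫_ℂ = ‖⟪v, u⟫_ℂ‖) :
    ‖⟪w, u - v⟫_ℂ‖ ≤ (phaseDist w u + ‖u - v‖ / 2) * ‖u - v‖ := by
  obtain ⟨α, -, hα⟩ := exists_phase_aligned w u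
  calc ‖⟪w, u - v⟫_ℂ‖ = ‖⟪exp (α * I) • w, u - v⟫_ℂ‖ := by
        rw [inner_smul_left, norm_mul, RCLike.norm_conj, norm_exp_ofReal_mul_I, one_mul]
    _ = ‖⟪exp (α * I) • w - u, u - v⟫_ℂ + ⟪u, u - v⟫_ℂ‖ := by
        rw [← inner_add_left, sub_add_cancel]
    _ ≤ ‖exp (α * I) • w - u‖ * ‖u - v‖ + ‖u - v‖ ^ 2 / 2 := by
        grw [norm_add_le, norm_inner_le_norm, ← two_mul_norm_inner_sub_eq huv halign]
        linarith
    _ = (phaseDist w u + ‖u - v‖ / 2) * ‖u - v‖ := by rw [hα]; ring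

theorem exists_phase_norm_inner_sub_le (w : E) {u v : E} (huv : ‖u‖ = ‖v‖) :
    ∃ θ : ℝ, ‖exp (θ * I) • u - v‖ = phaseDist u v ∧
      ‖⟪w, exp (θ * I) • u - v⟫_ℂ‖
        ≤ (3 * phaseDist u w + phaseDist v w) / 2 * ‖exp (θ * I) • u - v‖ := by
  obtain ⟨θ, halign, hθ⟩ := exists_phase_aligned u v
  have hnorm : ‖exp (θ * I) • u‖ = ‖v‖ := by
    rw [norm_smul, norm_exp_ofReal_mul_I, one_mul, huv]
  refine ⟨θ, hθ, (norm_inner_sub_le w hnorm halign).trans ?_⟩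
  grw [phaseDist_exp_smul_le]
  gcongr
  rw [hθ]
  linarith [phaseDist_triangle u v w]

end PhaseDist

theorem l2norm_eq_norm (v : Fin n → ℂ) : l2norm v = ‖toLp 2 v‖ := by
  simp [l2norm, EuclideanSpace.norm_eq]

theorem herm_eq_inner (x y : Fin n → ℂ) : herm x y = ⟪toLp 2 x, toLp 2 y⟫_ℂ := by
  simp [herm, PiLp.inner_apply, mul_comm]

theorem d2_eq_phaseDist (x y : Fin n → ℂ) : d2 x y = phaseDist (toLp 2 x) (toLp 2 y) := by
  simp only [d2, phaseDist, l2norm_eq_norm]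
  rfl

theorem d2_le_l2norm (x y : Fin n → ℂ) (θ : ℝ) : d2 x y ≤ l2norm (exp (θ * I) • x - y) := by
  rw [d2_eq_phaseDist, l2norm_eq_norm]
  exact phaseDist_le _ _ θ

theorem opNorm_eq_norm_toEuclideanCLM (A : Matrix (Fin n) (Fin n) ℂ) :
    opNorm A = ‖Matrix.toEuclideanCLM (𝕜 := ℂ) A‖ := by
  rw [← ContinuousLinearMap.sSup_sphere_eq_norm, opNorm, iSup]
  congr 1
  ext r
  constructor
  · rintro ⟨⟨u, hu⟩, rfl⟩
    exact ⟨toLp 2 u, by simpa [l2norm_eq_norm] using hu, by simp [l2norm_eq_norm]⟩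
  · rintro ⟨x, hx, rfl⟩
    exact ⟨⟨x.ofLp, by simpa [l2norm_eq_norm] using hx⟩, l2norm_eq_norm _⟩

theorem l2norm_mulVec_le (A : Matrix (Fin n) (Fin n) ℂ) (v : Fin n → ℂ) :
    l2norm (A *ᵥ v) ≤ opNorm A * l2norm v := by
  simpa [l2norm_eq_norm, opNorm_eq_norm_toEuclideanCLM] using
    (Matrix.toEuclideanCLM (𝕜 := ℂ) A).le_opNorm (toLp 2 v)

theorem herm_smul_sub (z x y : Fin n → ℂ) (c : ℂ) :
    herm z (c • x - y) = c * herm z x - herm z y := by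
  simp only [herm, Pi.sub_apply, Pi.smul_apply, smul_eq_mul, mul_sub, Finset.mul_sum,
    Finset.sum_sub_distrib, mul_left_comm]

theorem Lop_smul_sub (z : Fin n → ℂ) (σ : ℝ) (W : Matrix (Fin n) (Fin n) ℂ) (c : ℂ)
    (x y : Fin n → ℂ) : Lop z σ W (c • x - y) = c • Lop z σ W x - Lop z σ W y := by
  ext k
  simp only [Lop, herm_smul_sub, Matrix.mulVec_sub, Matrix.mulVec_smul, Pi.add_apply,
    Pi.sub_apply, Pi.smul_apply, smul_eq_mul, Complex.real_smul]
  ring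

theorem l2norm_Lop_le (z : Fin n → ℂ) {σ : ℝ} (hσ : 0 ≤ σ) (W : Matrix (Fin n) (Fin n) ℂ)
    (v : Fin n → ℂ) :
    l2norm (Lop z σ W v) ≤ ‖herm z v‖ / n * l2norm z + σ / n * (opNorm W * l2norm v) := by
  calc l2norm (Lop z σ W v)
      ≤ ‖(herm z v / n) • toLp 2 z‖ + ‖(σ / n) • toLp 2 (W *ᵥ v)‖ := by
        rw [l2norm_eq_norm]
        exact norm_add_le _ _
    _ ≤ ‖herm z v‖ / n * l2norm z + σ / n * (opNorm W * l2norm v) := by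
        rw [norm_smul, norm_smul, norm_div, Complex.norm_natCast,
          Real.norm_of_nonneg (by positivity), ← l2norm_eq_norm, ← l2norm_eq_norm]
        gcongr
        exact l2norm_mulVec_le W v

theorem d2_Lop_le_of_norm_herm_le (hn : 0 < n) {z : Fin n → ℂ} (hz : ∀ k, ‖z k‖ = 1)
    {σ : ℝ} (hσ : 0 ≤ σ) (W : Matrix (Fin n) (Fin n) ℂ) {x y : Fin n → ℂ} {θ K : ℝ}
    (hK : ‖herm z (exp (θ * I) • x - y)‖ ≤ K * √n * l2norm (exp (θ * I) • x - y)) :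
    d2 (Lop z σ W x) (Lop z σ W y)
      ≤ (K + σ * opNorm W / n) * l2norm (exp (θ * I) • x - y) := by
  set v := exp (θ * I) • x - y
  have hzn : l2norm z = √n := by simp [l2norm, hz]
  calc d2 (Lop z σ W x) (Lop z σ W y) ≤ l2norm (Lop z σ W v) := by
        rw [Lop_smul_sub]
        exact d2_le_l2norm _ _ θ
    _ ≤ ‖herm z v‖ / n * l2norm z + σ / n * (opNorm W * l2norm v) := l2norm_Lop_le z hσ W v
    _ ≤ K * √n * l2norm v / n * √n + σ / n * (opNorm W * l2norm v) := by rw [hzn]; gcongr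
    _ = (K + σ * opNorm W / n) * l2norm v := by
        field_simp
        rw [Real.sq_sqrt n.cast_nonneg]

theorem stmt10_general (n : ℕ) (hn : 0 < n) (z : Fin n → ℂ) (hz : ∀ k, ‖z k‖ = 1)
    (W : Matrix (Fin n) (Fin n) ℂ) (σ : ℝ) (hσ : 0 ≤ σ)
    (ε : ℝ) (hε0 : 0 < ε) (x y : Fin n → ℂ)
    (hxn : l2norm x = Real.sqrt n) (hyn : l2norm y = Real.sqrt n)
    (hxz : d2 x z ≤ ε * Real.sqrt n) (hyz : d2 y z ≤ ε * Real.sqrt n) :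
    d2 (Lop z σ W x) (Lop z σ W y) ≤ (6 * ε + σ * opNorm W / n) * d2 x y := by
  have hxy : ‖toLp 2 x‖ = ‖toLp 2 y‖ := by rw [← l2norm_eq_norm, ← l2norm_eq_norm, hxn, hyn]
  obtain ⟨θ, hθ, hinner⟩ := exists_phase_norm_inner_sub_le (toLp 2 z) hxy
  simp only [← d2_eq_phaseDist] at hθ hinner
  have hv : l2norm (exp (θ * I) • x - y) = d2 x y := by rw [l2norm_eq_norm, ← hθ]; rfl
  have hherm :
      ‖herm z (exp (θ * I) • x - y)‖ ≤ 2 * ε * √n * l2norm (exp (θ * I) • x - y) := by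
    rw [herm_eq_inner, l2norm_eq_norm, WithLp.toLp_sub, WithLp.toLp_smul]
    refine hinner.trans ?_
    gcongr
    linarith
  calc d2 (Lop z σ W x) (Lop z σ W y)
      ≤ (2 * ε + σ * opNorm W / n) * d2 x y := hv ▸ d2_Lop_le_of_norm_herm_le hn hz hσ W hherm
    _ ≤ (6 * ε + σ * opNorm W / n) * d2 x y := by
        gcongr
        · exact hv ▸ Real.sqrt_nonneg _
        · linarith

/-- the operator `ℒ v = (z*v/n) z + (σ/n) Wv` is Lipschitz with constant
`6ε + σ‖W‖₂/n` for `d₂` on norm-`√n` vectors within `d₂`-distance `ε√n` of `z`. -/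
theorem stmt10 (n : ℕ) (hn : 0 < n) (z : Fin n → ℂ) (hz : ∀ k, ‖z k‖ = 1)
    (W : Matrix (Fin n) (Fin n) ℂ) (hW : W.IsHermitian) (σ : ℝ) (hσ : 0 ≤ σ)
    (ε : ℝ) (hε0 : 0 < ε) (hε : ε < 1 / 2) (x y : Fin n → ℂ)
    (hxn : l2norm x = Real.sqrt n) (hyn : l2norm y = Real.sqrt n)
    (hxz : d2 x z ≤ ε * Real.sqrt n) (hyz : d2 y z ≤ ε * Real.sqrt n) :
    d2 (Lop z σ W x) (Lop z σ W y) ≤ (6 * ε + σ * opNorm W / n) * d2 x y :=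
  stmt10_general n hn z hz W σ hσ ε hε0 x y hxn hyn hxz hyz

end PhaseSync
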